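/- arXiv:2510.26986 — 3 statements merged into one kernel-verified Lean document; each statement's English description precedes it below -/
import Mathlib

section
/- Let Φ : ℝ³ → ℝ³ be a C² diffeomorphism and let Ê : ℝ³ → ℝ³ be a C¹ vector field. Define the 1-form push-forward E(x) := (DΦ(Φ⁻¹(x)))⁻ᵀ Ê(Φ⁻¹(x)). Then for every x̂ ∈ ℝ³, (curl E)(Φ(x̂)) = DΦ(x̂) (curl Ê)(x̂) / det DΦ(x̂); that is, the curl of the 1-form push-forward equals the 2-form push-forward of the curl. -/
open MeasureTheory Matrix RealInnerProductSpace

noncomputable section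

/-- Points/vectors in ℝ³. -/
abbrev V3 : Type := Fin 3 → ℝ

/-- Partial derivative ∂ᵢ of a scalar function on ℝ³. -/
def pder (i : Fin 3) (f : V3 → ℝ) (x : V3) : ℝ :=
  fderiv ℝ f x (Pi.single i 1)

/-- Gradient of a scalar function on ℝ³. -/
def grad (f : V3 → ℝ) (x : V3) : V3 :=
  fun i => pder i f x

/-- Curl of a vector field on ℝ³. -/
def curl (F : V3 → V3) (x : V3) : V3 :=
  ![pder 1 (fun y => F y 2) x - pder 2 (fun y => F y 1) x,
    pder 2 (fun y => F y 0) x - pder 0 (fun y => F y 2) x,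
    pder 0 (fun y => F y 1) x - pder 1 (fun y => F y 0) x]

/-- Divergence of a vector field on ℝ³. -/
def dvg (F : V3 → V3) (x : V3) : ℝ :=
  pder 0 (fun y => F y 0) x + pder 1 (fun y => F y 1) x + pder 2 (fun y => F y 2) x

/-- Cross product on ℝ³. -/
def cross (a b : V3) : V3 :=
  ![a 1 * b 2 - a 2 * b 1, a 2 * b 0 - a 0 * b 2, a 0 * b 1 - a 1 * b 0]

/-- Euclidean dot product on ℝ³. -/
def dot (a b : V3) : ℝ := ∑ i, a i * b i

/-- Jacobian matrix (DΦ(x))ᵢⱼ = ∂Φᵢ/∂xⱼ. -/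
def jac (Φ : V3 → V3) (x : V3) : Matrix (Fin 3) (Fin 3) ℝ :=
  Matrix.of fun i j => pder j (fun y => Φ y i) x


/-! With `B = DΨ`, the 1-form push-forward is `E = Bᵀ (Ê ∘ Ψ)`, and the product and chain rules
give `DE = Bᵀ (DÊ ∘ Ψ) B + ∑ₖ (Êₖ ∘ Ψ) D²Ψₖ`. The curl only sees the skew part of a Jacobian, so
the Hessians `D²Ψₖ` drop out by Schwarz, and congruence by `B` acts on axial vectors of skew
matrices as `adj B` (the identity `Bu × Bv = (adj B)ᵀ (u × v)`). At `Φ x̂` we have `B = (DΦ)⁻¹`,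
hence `adj B = (det DΦ)⁻¹ DΦ`. -/

lemma jac_eq_toMatrix' {f : V3 → V3} {x : V3} (hf : DifferentiableAt ℝ f x) :
    jac f x = LinearMap.toMatrix' (fderiv ℝ f x : V3 →ₗ[ℝ] V3) := by
  ext i j
  simp [jac, pder, fderiv_apply hf i]

lemma jac_comp {f g : V3 → V3} {x : V3} (hg : DifferentiableAt ℝ g (f x))
    (hf : DifferentiableAt ℝ f x) : jac (g ∘ f) x = jac g (f x) * jac f x := by
  rw [jac_eq_toMatrix' (hg.comp x hf), jac_eq_toMatrix' hg, jac_eq_toMatrix' hf,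
    fderiv_comp x hg hf, ← LinearMap.toMatrix'_comp]
  rfl

lemma jac_mul_jac_of_leftInverse {f g : V3 → V3} {x : V3} (h : Function.LeftInverse g f)
    (hg : DifferentiableAt ℝ g (f x)) (hf : DifferentiableAt ℝ f x) :
    jac g (f x) * jac f x = 1 := by
  rw [← jac_comp hg hf, h.comp_eq_id, jac_eq_toMatrix' differentiableAt_id, fderiv_id]
  exact LinearMap.toMatrix'_id

lemma pder_fun_mul {f g : V3 → ℝ} {x : V3} (hf : DifferentiableAt ℝ f x)
    (hg : DifferentiableAt ℝ g x) (i : Fin 3) :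
    pder i (fun y => f y * g y) x = pder i f x * g x + f x * pder i g x := by
  simp only [pder, fderiv_fun_mul hf hg, _root_.add_apply,
    _root_.smul_apply, smul_eq_mul]
  ring

lemma pder_fun_sum {ι : Type*} {s : Finset ι} {f : ι → V3 → ℝ} {x : V3}
    (hf : ∀ k ∈ s, DifferentiableAt ℝ (f k) x) (i : Fin 3) :
    pder i (fun y => ∑ k ∈ s, f k y) x = ∑ k ∈ s, pder i (f k) x := by
  simp [pder, fderiv_fun_sum hf]

lemma jac_grad_isSymm {f : V3 → ℝ} {x : V3} (hf : ContDiffAt ℝ 2 f x) :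
    (jac (grad f) x).IsSymm := by
  have hdf : DifferentiableAt ℝ (fderiv ℝ f) x :=
    (hf.fderiv_right (m := 1) (by norm_num)).differentiableAt one_ne_zero
  have hentry : ∀ i j,
      jac (grad f) x i j = fderiv ℝ (fderiv ℝ f) x (Pi.single j 1) (Pi.single i 1) := by
    intro i j
    simp [jac, grad, pder, fderiv_clm_apply hdf (differentiableAt_const _)]
  have hsymm := hf.isSymmSndFDerivAt (by simp)
  ext i j
  rw [Matrix.transpose_apply, hentry, hentry, hsymm]

/-- `axial M` is the axial vector of `M - Mᵀ`, i.e. `(M - Mᵀ) *ᵥ v = cross (axial M) v`. -/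
def axial (M : Matrix (Fin 3) (Fin 3) ℝ) : V3 :=
  ![M 2 1 - M 1 2, M 0 2 - M 2 0, M 1 0 - M 0 1]

lemma curl_eq_axial_jac (F : V3 → V3) (x : V3) : curl F x = axial (jac F x) := rfl

lemma axial_add_of_isSymm {S : Matrix (Fin 3) (Fin 3) ℝ} (hS : S.IsSymm)
    (M : Matrix (Fin 3) (Fin 3) ℝ) : axial (S + M) = axial M := by
  have h : ∀ i j, S i j = S j i := fun i j => hS.apply j i
  ext m
  fin_cases m <;> simp [axial, h 2 1, h 0 2, h 1 0]

lemma axial_transpose_mul_mul (B M : Matrix (Fin 3) (Fin 3) ℝ) :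
    axial (Bᵀ * M * B) = B.adjugate *ᵥ axial M := by
  ext m
  fin_cases m <;>
  · simp [axial, Matrix.adjugate_fin_three, Matrix.mul_apply, Matrix.mulVec, dotProduct,
      Fin.sum_univ_three]
    ring

lemma adjugate_eq_inv_det_smul_of_mul_eq_one {n K : Type*} [Fintype n] [DecidableEq n] [Field K]
    {A B : Matrix n n K} (h : B * A = 1) :
    B.adjugate = A.det⁻¹ • A := by
  have hdet : B.det = A.det⁻¹ :=
    eq_inv_of_mul_eq_one_left (by rw [← Matrix.det_mul, h, Matrix.det_one])
  calc B.adjugate = B.adjugate * (B * A) := by rw [h, Matrix.mul_one]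
    _ = B.det • A := by
      rw [← Matrix.mul_assoc, Matrix.adjugate_mul, Matrix.smul_mul, Matrix.one_mul]
    _ = A.det⁻¹ • A := by rw [hdet]

lemma jac_transpose_mulVec_comp {Ψ G : V3 → V3} {x : V3} (hΨ : ContDiffAt ℝ 2 Ψ x)
    (hG : DifferentiableAt ℝ G (Ψ x)) :
    jac (fun y => (jac Ψ y)ᵀ *ᵥ G (Ψ y)) x
      = ∑ k, G (Ψ x) k • jac (grad fun y => Ψ y k) x + (jac Ψ x)ᵀ * jac G (Ψ x) * jac Ψ x := by
  have hΨd : DifferentiableAt ℝ Ψ x := hΨ.differentiableAt two_ne_zero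
  have hGΨ : DifferentiableAt ℝ (G ∘ Ψ) x := hG.comp x hΨd
  have hjacΨ : ∀ k b, DifferentiableAt ℝ (fun y => jac Ψ y k b) x := fun k b =>
    (((contDiffAt_pi.1 hΨ k).fderiv_right (m := 1) (by norm_num)).differentiableAt
      one_ne_zero).clm_apply (differentiableAt_const _)
  have hGΨk : ∀ k, DifferentiableAt ℝ (fun y => G (Ψ y) k) x := fun k =>
    differentiableAt_pi.1 hGΨ k
  ext b a
  calc pder a (fun y => ∑ k, jac Ψ y k b * G (Ψ y) k) x
      = ∑ k, (pder a (fun y => jac Ψ y k b) x * G (Ψ x) k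
          + jac Ψ x k b * jac (G ∘ Ψ) x k a) := by
        rw [pder_fun_sum (f := fun k y => jac Ψ y k b * G (Ψ y) k)
          fun k _ => (hjacΨ k b).fun_mul (hGΨk k)]
        exact Finset.sum_congr rfl fun k _ => pder_fun_mul (hjacΨ k b) (hGΨk k) a
    _ = _ := by
        simp only [jac_comp hG hΨd, Matrix.add_apply, Matrix.sum_apply, Matrix.smul_apply,
          Matrix.mul_assoc, Matrix.mul_apply (M := (jac Ψ x)ᵀ), Matrix.transpose_apply,
          smul_eq_mul, ← Finset.sum_add_distrib]
        exact Finset.sum_congr rfl fun k _ => by rw [mul_comm]; rfl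

lemma curl_transpose_mulVec_comp {Ψ G : V3 → V3} {x : V3} (hΨ : ContDiffAt ℝ 2 Ψ x)
    (hG : DifferentiableAt ℝ G (Ψ x)) :
    curl (fun y => (jac Ψ y)ᵀ *ᵥ G (Ψ y)) x = (jac Ψ x).adjugate *ᵥ curl G (Ψ x) := by
  have hsymm : (∑ k, G (Ψ x) k • jac (grad fun y => Ψ y k) x).IsSymm := by
    refine Finset.sum_induction _ Matrix.IsSymm (fun _ _ => Matrix.IsSymm.add)
      Matrix.isSymm_zero fun k _ => (jac_grad_isSymm (contDiffAt_pi.1 hΨ k)).smul _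
  rw [curl_eq_axial_jac, jac_transpose_mulVec_comp hΨ hG, axial_add_of_isSymm hsymm,
    axial_transpose_mul_mul, curl_eq_axial_jac]

/-- the curl of the 1-form push-forward equals the 2-form
push-forward of the curl. -/
theorem pushforward_one_form_curl
    (Φ Ψ : V3 → V3) (hΦ : ContDiff ℝ 2 Φ) (hΨ : ContDiff ℝ 2 Ψ)
    (hleft : Function.LeftInverse Ψ Φ) (hright : Function.RightInverse Ψ Φ)
    (Ehat : V3 → V3) (hEhat : ContDiff ℝ 1 Ehat)
    (E : V3 → V3)
    (hE : E = fun x => ((jac Φ (Ψ x))⁻¹)ᵀ.mulVec (Ehat (Ψ x))) :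
    ∀ xhat : V3,
      curl E (Φ xhat)
        = ((jac Φ xhat).det)⁻¹ • (jac Φ xhat).mulVec (curl Ehat xhat) := by
  have hΦd : Differentiable ℝ Φ := hΦ.differentiable two_ne_zero
  have hΨd : Differentiable ℝ Ψ := hΨ.differentiable two_ne_zero
  have hjac_inv : ∀ x, (jac Φ (Ψ x))⁻¹ = jac Ψ x := fun x =>
    Matrix.inv_eq_left_inv <| by
      simpa only [hright x] using jac_mul_jac_of_leftInverse hleft (hΨd _) (hΦd (Ψ x))
  have hE' : E = fun x => (jac Ψ x)ᵀ *ᵥ Ehat (Ψ x) := by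
    simp only [hE, hjac_inv]
  intro xhat
  rw [hE', curl_transpose_mulVec_comp hΨ.contDiffAt (hEhat.differentiable one_ne_zero _),
    hleft xhat, adjugate_eq_inv_det_smul_of_mul_eq_one
      (jac_mul_jac_of_leftInverse hleft (hΨd _) (hΦd xhat)), Matrix.smul_mulVec]

end
end

section
/- Let A, v : ℝ³ → ℝ³ be smooth compactly supported vector fields, let φ : ℝ³ → ℝ be smooth and compactly supported, and set B := curl A. Then ∫_{ℝ³} (v × B + ∇φ) · B dx + ∫_{ℝ³} A · curl(v × B) dx = 0. (This expresses that admissible variations δB = curl(v × B), with corresponding vector-potential variation δA = v × B + ∇φ, leave the magnetic helicity H(B) = ∫ A · B dx unchanged.) -/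
open MeasureTheory Matrix RealInnerProductSpace

noncomputable section

/- ### Auxiliary lemmas -/

lemma contDiff_pder {f : V3 → ℝ} (hf : ContDiff ℝ (⊤ : ℕ∞) f) (i : Fin 3) :
    ContDiff ℝ (⊤ : ℕ∞) (pder i f) :=
  (hf.fderiv_right (by simp)).clm_apply contDiff_const

lemma hasCompactSupport_pder {f : V3 → ℝ} (hf : HasCompactSupport f) (i : Fin 3) :
    HasCompactSupport (pder i f) :=
  hf.fderiv_apply ℝ (Pi.single i 1)

lemma pder_sub' {f g : V3 → ℝ} {x : V3} (hf : DifferentiableAt ℝ f x)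
    (hg : DifferentiableAt ℝ g x) (i : Fin 3) :
    pder i (fun y => f y - g y) x = pder i f x - pder i g x := by
  unfold pder; rw [fderiv_fun_sub hf hg]; rfl

lemma pder_comm' {f : V3 → ℝ} (hf : ContDiff ℝ (⊤ : ℕ∞) f) (i j : Fin 3) (x : V3) :
    pder i (pder j f) x = pder j (pder i f) x := by
  have hd : DifferentiableAt ℝ (fderiv ℝ f) x :=
    ((hf.fderiv_right (m := (⊤ : ℕ∞)) (by simp)).differentiable (by simp)).differentiableAt
  have hsymm : IsSymmSndFDerivAt ℝ f x :=
    (hf.contDiffAt).isSymmSndFDerivAt (by rw [minSmoothness_of_isRCLikeNormedField]; exact WithTop.coe_le_coe.2 (le_top : (2 : ℕ∞) ≤ ⊤))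
  have key : ∀ (k l : Fin 3),
      pder k (pder l f) x = fderiv ℝ (fderiv ℝ f) x (Pi.single k 1) (Pi.single l 1) := by
    intro k l
    unfold pder
    rw [fderiv_clm_apply hd (differentiableAt_const _)]
    simp
  rw [key, key, hsymm]

lemma hcs_sub' {f g : V3 → ℝ} (hf : HasCompactSupport f) (hg : HasCompactSupport g) :
    HasCompactSupport (fun y => f y - g y) := hf.sub hg

lemma ibp' (i : Fin 3) {f g : V3 → ℝ} (hf : ContDiff ℝ (⊤ : ℕ∞) f) (hg : ContDiff ℝ (⊤ : ℕ∞) g)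
    (hsf : HasCompactSupport f) (hsg : HasCompactSupport g) :
    ∫ x : V3, f x * pder i g x = - ∫ x : V3, pder i f x * g x := by
  apply integral_mul_fderiv_eq_neg_fderiv_mul_of_integrable
  · exact (((contDiff_pder hf i).continuous.mul hg.continuous).integrable_of_hasCompactSupport
      ((hasCompactSupport_pder hsf i).mul_right))
  · exact ((hf.continuous.mul (contDiff_pder hg i).continuous).integrable_of_hasCompactSupport
      (hsf.mul_right))
  · exact ((hf.continuous.mul hg.continuous).integrable_of_hasCompactSupport hsf.mul_right)
  · exact fun x _ => (hf.differentiable (by simp)).differentiableAt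
  · exact fun x _ => (hg.differentiable (by simp)).differentiableAt

lemma integral_three' (f1 f2 f3 : V3 → ℝ) (h1 : Integrable f1) (h2 : Integrable f2)
    (h3 : Integrable f3) :
    ∫ x : V3, (f1 x + f2 x + f3 x) =
      (∫ x : V3, f1 x) + (∫ x : V3, f2 x) + (∫ x : V3, f3 x) := by
  have h12 : Integrable (fun x : V3 => f1 x + f2 x) := h1.add h2
  rw [integral_add h12 h3, integral_add h1 h2]

lemma integral_six' (f1 f2 f3 f4 f5 f6 : V3 → ℝ) (h1 : Integrable f1) (h2 : Integrable f2)
    (h3 : Integrable f3) (h4 : Integrable f4) (h5 : Integrable f5) (h6 : Integrable f6) :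
    ∫ x : V3, (f1 x + f2 x + f3 x + f4 x + f5 x + f6 x) =
      (∫ x : V3, f1 x) + (∫ x : V3, f2 x) + (∫ x : V3, f3 x) + (∫ x : V3, f4 x)
        + (∫ x : V3, f5 x) + (∫ x : V3, f6 x) := by
  have h12 : Integrable (fun x : V3 => f1 x + f2 x) := h1.add h2
  have h123 : Integrable (fun x : V3 => f1 x + f2 x + f3 x) := h12.add h3
  have h1234 : Integrable (fun x : V3 => f1 x + f2 x + f3 x + f4 x) := h123.add h4
  have h12345 : Integrable (fun x : V3 => f1 x + f2 x + f3 x + f4 x + f5 x) := h1234.add h5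
  rw [integral_add h12345 h6, integral_add h1234 h5, integral_add h123 h4,
    integral_add h12 h3, integral_add h1 h2]

/-- admissible variations leave the magnetic helicity unchanged:
∫ (v × B + ∇φ) · B + ∫ A · curl(v × B) = 0 for B = curl A. -/
theorem helicity_first_variation
    (A v : V3 → V3) (φ : V3 → ℝ)
    (hA : ContDiff ℝ (⊤ : ℕ∞) A) (hv : ContDiff ℝ (⊤ : ℕ∞) v) (hφ : ContDiff ℝ (⊤ : ℕ∞) φ)
    (hsA : HasCompactSupport A) (hsv : HasCompactSupport v) (hsφ : HasCompactSupport φ)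
    (B : V3 → V3) (hB : B = fun x => curl A x) :
    (∫ x : V3, dot (cross (v x) (B x) + grad φ x) (B x))
      + (∫ x : V3, dot (A x) (curl (fun y => cross (v y) (B y)) x)) = 0 := by
  -- components of A and v
  have hAc : ∀ k : Fin 3, ContDiff ℝ (⊤ : ℕ∞) (fun y => A y k) := fun k => contDiff_pi.1 hA k
  have hvc : ∀ k : Fin 3, ContDiff ℝ (⊤ : ℕ∞) (fun y => v y k) := fun k => contDiff_pi.1 hv k
  have hsAc : ∀ k : Fin 3, HasCompactSupport (fun y => A y k) := fun k =>
    hsA.comp_left (g := fun w : V3 => w k) rfl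
  have hsvc : ∀ k : Fin 3, HasCompactSupport (fun y => v y k) := fun k =>
    hsv.comp_left (g := fun w : V3 => w k) rfl
  -- components of B
  have hB0 : ∀ y, B y 0 = pder 1 (fun z => A z 2) y - pder 2 (fun z => A z 1) y := by
    intro y; rw [hB]; simp [curl]
  have hB1 : ∀ y, B y 1 = pder 2 (fun z => A z 0) y - pder 0 (fun z => A z 2) y := by
    intro y; rw [hB]; simp [curl]
  have hB2 : ∀ y, B y 2 = pder 0 (fun z => A z 1) y - pder 1 (fun z => A z 0) y := by
    intro y; rw [hB]; simp [curl]
  have hB0f : (fun y => B y 0) = fun y => pder 1 (fun z => A z 2) y - pder 2 (fun z => A z 1) y :=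
    funext hB0
  have hB1f : (fun y => B y 1) = fun y => pder 2 (fun z => A z 0) y - pder 0 (fun z => A z 2) y :=
    funext hB1
  have hB2f : (fun y => B y 2) = fun y => pder 0 (fun z => A z 1) y - pder 1 (fun z => A z 0) y :=
    funext hB2
  have hBc0 : ContDiff ℝ (⊤ : ℕ∞) (fun y => B y 0) := by
    rw [hB0f]; exact (contDiff_pder (hAc 2) 1).sub (contDiff_pder (hAc 1) 2)
  have hBc1 : ContDiff ℝ (⊤ : ℕ∞) (fun y => B y 1) := by
    rw [hB1f]; exact (contDiff_pder (hAc 0) 2).sub (contDiff_pder (hAc 2) 0)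
  have hBc2 : ContDiff ℝ (⊤ : ℕ∞) (fun y => B y 2) := by
    rw [hB2f]; exact (contDiff_pder (hAc 1) 0).sub (contDiff_pder (hAc 0) 1)
  have hBc : ∀ k : Fin 3, ContDiff ℝ (⊤ : ℕ∞) (fun y => B y k) := fun k =>
    match k with | 0 => hBc0 | 1 => hBc1 | 2 => hBc2
  have hsBc0 : HasCompactSupport (fun y => B y 0) := by
    rw [hB0f]; exact hcs_sub' (hasCompactSupport_pder (hsAc 2) 1) (hasCompactSupport_pder (hsAc 1) 2)
  have hsBc1 : HasCompactSupport (fun y => B y 1) := by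
    rw [hB1f]; exact hcs_sub' (hasCompactSupport_pder (hsAc 0) 2) (hasCompactSupport_pder (hsAc 2) 0)
  have hsBc2 : HasCompactSupport (fun y => B y 2) := by
    rw [hB2f]; exact hcs_sub' (hasCompactSupport_pder (hsAc 1) 0) (hasCompactSupport_pder (hsAc 0) 1)
  have hsBc : ∀ k : Fin 3, HasCompactSupport (fun y => B y k) := fun k =>
    match k with | 0 => hsBc0 | 1 => hsBc1 | 2 => hsBc2
  -- W = v × B
  set W : V3 → V3 := fun y => cross (v y) (B y) with hW
  have hW0 : ∀ y, W y 0 = v y 1 * B y 2 - v y 2 * B y 1 := by intro y; simp [hW, cross]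
  have hW1 : ∀ y, W y 1 = v y 2 * B y 0 - v y 0 * B y 2 := by intro y; simp [hW, cross]
  have hW2 : ∀ y, W y 2 = v y 0 * B y 1 - v y 1 * B y 0 := by intro y; simp [hW, cross]
  have hWc0 : ContDiff ℝ (⊤ : ℕ∞) (fun y => W y 0) := by
    rw [funext hW0]; exact ((hvc 1).mul (hBc 2)).sub ((hvc 2).mul (hBc 1))
  have hWc1 : ContDiff ℝ (⊤ : ℕ∞) (fun y => W y 1) := by
    rw [funext hW1]; exact ((hvc 2).mul (hBc 0)).sub ((hvc 0).mul (hBc 2))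
  have hWc2 : ContDiff ℝ (⊤ : ℕ∞) (fun y => W y 2) := by
    rw [funext hW2]; exact ((hvc 0).mul (hBc 1)).sub ((hvc 1).mul (hBc 0))
  have hWc : ∀ k : Fin 3, ContDiff ℝ (⊤ : ℕ∞) (fun y => W y k) := fun k =>
    match k with | 0 => hWc0 | 1 => hWc1 | 2 => hWc2
  have hsWc0 : HasCompactSupport (fun y => W y 0) := by
    rw [funext hW0]; exact hcs_sub' ((hsvc 1).mul_right) ((hsvc 2).mul_right)
  have hsWc1 : HasCompactSupport (fun y => W y 1) := by
    rw [funext hW1]; exact hcs_sub' ((hsvc 2).mul_right) ((hsvc 0).mul_right)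
  have hsWc2 : HasCompactSupport (fun y => W y 2) := by
    rw [funext hW2]; exact hcs_sub' ((hsvc 0).mul_right) ((hsvc 1).mul_right)
  have hsWc : ∀ k : Fin 3, HasCompactSupport (fun y => W y k) := fun k =>
    match k with | 0 => hsWc0 | 1 => hsWc1 | 2 => hsWc2
  -- integrability helper
  have hint : ∀ (f g : V3 → ℝ), ContDiff ℝ (⊤ : ℕ∞) f → ContDiff ℝ (⊤ : ℕ∞) g → HasCompactSupport f →
      Integrable (fun x : V3 => f x * g x) := fun f g cf cg sf =>
    (cf.continuous.mul cg.continuous).integrable_of_hasCompactSupport sf.mul_right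
  -- divergence of B vanishes
  have hdvgB : ∀ x : V3, pder 0 (fun y => B y 0) x + pder 1 (fun y => B y 1) x
      + pder 2 (fun y => B y 2) x = 0 := by
    intro x
    have dA : ∀ (i : Fin 3) (k : Fin 3), DifferentiableAt ℝ (pder i (fun z => A z k)) x :=
      fun i k => ((contDiff_pder (hAc k) i).differentiable (by simp)).differentiableAt
    rw [hB0f, hB1f, hB2f, pder_sub' (dA 1 2) (dA 2 1) 0, pder_sub' (dA 2 0) (dA 0 2) 1,
      pder_sub' (dA 0 1) (dA 1 0) 2]
    have e1 := pder_comm' (hAc 0) 1 2 x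
    have e2 := pder_comm' (hAc 1) 2 0 x
    have e3 := pder_comm' (hAc 2) 0 1 x
    linarith
  ------------------------------------------------------------------
  -- FIRST INTEGRAL
  ------------------------------------------------------------------
  have hI1 : (∫ x : V3, dot (cross (v x) (B x) + grad φ x) (B x)) = 0 := by
    have step1 : (∫ x : V3, dot (cross (v x) (B x) + grad φ x) (B x))
        = ∫ x : V3, (pder 0 φ x * B x 0 + pder 1 φ x * B x 1 + pder 2 φ x * B x 2) := by
      congr 1; funext x
      simp [dot, cross, grad, Fin.sum_univ_three]
      ring
    have i0 : Integrable (fun x : V3 => pder 0 φ x * B x 0) :=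
      hint _ _ (contDiff_pder hφ 0) (hBc 0) (hasCompactSupport_pder hsφ 0)
    have i1 : Integrable (fun x : V3 => pder 1 φ x * B x 1) :=
      hint _ _ (contDiff_pder hφ 1) (hBc 1) (hasCompactSupport_pder hsφ 1)
    have i2 : Integrable (fun x : V3 => pder 2 φ x * B x 2) :=
      hint _ _ (contDiff_pder hφ 2) (hBc 2) (hasCompactSupport_pder hsφ 2)
    have step2 := integral_three' _ _ _ i0 i1 i2
    have e0 := ibp' 0 hφ (hBc 0) hsφ (hsBc 0)
    have e1 := ibp' 1 hφ (hBc 1) hsφ (hsBc 1)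
    have e2 := ibp' 2 hφ (hBc 2) hsφ (hsBc 2)
    -- sum of the φ * ∂B integrals is zero
    have j0 : Integrable (fun x : V3 => φ x * pder 0 (fun y => B y 0) x) :=
      hint _ _ hφ (contDiff_pder (hBc 0) 0) hsφ
    have j1 : Integrable (fun x : V3 => φ x * pder 1 (fun y => B y 1) x) :=
      hint _ _ hφ (contDiff_pder (hBc 1) 1) hsφ
    have j2 : Integrable (fun x : V3 => φ x * pder 2 (fun y => B y 2) x) :=
      hint _ _ hφ (contDiff_pder (hBc 2) 2) hsφ
    have hz : (∫ x : V3, (φ x * pder 0 (fun y => B y 0) x + φ x * pder 1 (fun y => B y 1) x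
        + φ x * pder 2 (fun y => B y 2) x)) = 0 := by
      have : (fun x : V3 => φ x * pder 0 (fun y => B y 0) x + φ x * pder 1 (fun y => B y 1) x
          + φ x * pder 2 (fun y => B y 2) x) = fun _ => (0 : ℝ) := by
        funext x
        have h := hdvgB x
        calc φ x * pder 0 (fun y => B y 0) x + φ x * pder 1 (fun y => B y 1) x
            + φ x * pder 2 (fun y => B y 2) x
            = φ x * (pder 0 (fun y => B y 0) x + pder 1 (fun y => B y 1) x
              + pder 2 (fun y => B y 2) x) := by ring
          _ = 0 := by rw [h, mul_zero]
      rw [this]; simp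
    have hz' := integral_three' _ _ _ j0 j1 j2
    rw [step1, step2]
    rw [hz'] at hz
    linarith
  ------------------------------------------------------------------
  -- SECOND INTEGRAL
  ------------------------------------------------------------------
  have hI2 : (∫ x : V3, dot (A x) (curl W x)) = 0 := by
    have step1 : (∫ x : V3, dot (A x) (curl W x))
        = ∫ x : V3, (A x 0 * pder 1 (fun y => W y 2) x + -(A x 0 * pder 2 (fun y => W y 1) x)
          + A x 1 * pder 2 (fun y => W y 0) x + -(A x 1 * pder 0 (fun y => W y 2) x)
          + A x 2 * pder 0 (fun y => W y 1) x + -(A x 2 * pder 1 (fun y => W y 0) x)) := by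
      congr 1; funext x
      simp [dot, curl, Fin.sum_univ_three]
      ring
    have t1 : Integrable (fun x : V3 => A x 0 * pder 1 (fun y => W y 2) x) :=
      hint _ _ (hAc 0) (contDiff_pder (hWc 2) 1) (hsAc 0)
    have t2 : Integrable (fun x : V3 => -(A x 0 * pder 2 (fun y => W y 1) x)) :=
      (hint _ _ (hAc 0) (contDiff_pder (hWc 1) 2) (hsAc 0)).neg
    have t3 : Integrable (fun x : V3 => A x 1 * pder 2 (fun y => W y 0) x) :=
      hint _ _ (hAc 1) (contDiff_pder (hWc 0) 2) (hsAc 1)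
    have t4 : Integrable (fun x : V3 => -(A x 1 * pder 0 (fun y => W y 2) x)) :=
      (hint _ _ (hAc 1) (contDiff_pder (hWc 2) 0) (hsAc 1)).neg
    have t5 : Integrable (fun x : V3 => A x 2 * pder 0 (fun y => W y 1) x) :=
      hint _ _ (hAc 2) (contDiff_pder (hWc 1) 0) (hsAc 2)
    have t6 : Integrable (fun x : V3 => -(A x 2 * pder 1 (fun y => W y 0) x)) :=
      (hint _ _ (hAc 2) (contDiff_pder (hWc 0) 1) (hsAc 2)).neg
    have step2 := integral_six' _ _ _ _ _ _ t1 t2 t3 t4 t5 t6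
    -- integration by parts on each term
    have e1 := ibp' 1 (hAc 0) (hWc 2) (hsAc 0) (hsWc 2)
    have e2 := ibp' 2 (hAc 0) (hWc 1) (hsAc 0) (hsWc 1)
    have e3 := ibp' 2 (hAc 1) (hWc 0) (hsAc 1) (hsWc 0)
    have e4 := ibp' 0 (hAc 1) (hWc 2) (hsAc 1) (hsWc 2)
    have e5 := ibp' 0 (hAc 2) (hWc 1) (hsAc 2) (hsWc 1)
    have e6 := ibp' 1 (hAc 2) (hWc 0) (hsAc 2) (hsWc 0)
    -- neg integrals
    have n2 : (∫ x : V3, -(A x 0 * pder 2 (fun y => W y 1) x))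
        = - ∫ x : V3, A x 0 * pder 2 (fun y => W y 1) x := integral_neg _
    have n4 : (∫ x : V3, -(A x 1 * pder 0 (fun y => W y 2) x))
        = - ∫ x : V3, A x 1 * pder 0 (fun y => W y 2) x := integral_neg _
    have n6 : (∫ x : V3, -(A x 2 * pder 1 (fun y => W y 0) x))
        = - ∫ x : V3, A x 2 * pder 1 (fun y => W y 0) x := integral_neg _
    -- the combined IBP'd integrand vanishes pointwise
    have s1 : Integrable (fun x : V3 => -(pder 1 (fun y => A y 0) x * W x 2)) :=
      (hint _ _ (contDiff_pder (hAc 0) 1) (hWc 2) (hasCompactSupport_pder (hsAc 0) 1)).neg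
    have s2 : Integrable (fun x : V3 => pder 2 (fun y => A y 0) x * W x 1) :=
      hint _ _ (contDiff_pder (hAc 0) 2) (hWc 1) (hasCompactSupport_pder (hsAc 0) 2)
    have s3 : Integrable (fun x : V3 => -(pder 2 (fun y => A y 1) x * W x 0)) :=
      (hint _ _ (contDiff_pder (hAc 1) 2) (hWc 0) (hasCompactSupport_pder (hsAc 1) 2)).neg
    have s4 : Integrable (fun x : V3 => pder 0 (fun y => A y 1) x * W x 2) :=
      hint _ _ (contDiff_pder (hAc 1) 0) (hWc 2) (hasCompactSupport_pder (hsAc 1) 0)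
    have s5 : Integrable (fun x : V3 => -(pder 0 (fun y => A y 2) x * W x 1)) :=
      (hint _ _ (contDiff_pder (hAc 2) 0) (hWc 1) (hasCompactSupport_pder (hsAc 2) 0)).neg
    have s6 : Integrable (fun x : V3 => pder 1 (fun y => A y 2) x * W x 0) :=
      hint _ _ (contDiff_pder (hAc 2) 1) (hWc 0) (hasCompactSupport_pder (hsAc 2) 1)
    have hzsum := integral_six' _ _ _ _ _ _ s1 s2 s3 s4 s5 s6
    have hz : (∫ x : V3, (-(pder 1 (fun y => A y 0) x * W x 2)
        + pder 2 (fun y => A y 0) x * W x 1 + -(pder 2 (fun y => A y 1) x * W x 0)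
        + pder 0 (fun y => A y 1) x * W x 2 + -(pder 0 (fun y => A y 2) x * W x 1)
        + pder 1 (fun y => A y 2) x * W x 0)) = 0 := by
      have : (fun x : V3 => -(pder 1 (fun y => A y 0) x * W x 2)
          + pder 2 (fun y => A y 0) x * W x 1 + -(pder 2 (fun y => A y 1) x * W x 0)
          + pder 0 (fun y => A y 1) x * W x 2 + -(pder 0 (fun y => A y 2) x * W x 1)
          + pder 1 (fun y => A y 2) x * W x 0) = fun _ => (0 : ℝ) := by
        funext x
        rw [hW0 x, hW1 x, hW2 x, hB0 x, hB1 x, hB2 x]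
        ring
      rw [this]; simp
    have ns1 : (∫ x : V3, -(pder 1 (fun y => A y 0) x * W x 2))
        = - ∫ x : V3, pder 1 (fun y => A y 0) x * W x 2 := integral_neg _
    have ns3 : (∫ x : V3, -(pder 2 (fun y => A y 1) x * W x 0))
        = - ∫ x : V3, pder 2 (fun y => A y 1) x * W x 0 := integral_neg _
    have ns5 : (∫ x : V3, -(pder 0 (fun y => A y 2) x * W x 1))
        = - ∫ x : V3, pder 0 (fun y => A y 2) x * W x 1 := integral_neg _
    rw [step1, step2, n2, n4, n6]
    rw [hzsum, ns1, ns3, ns5] at hz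
    linarith
  rw [hI1, hI2]
  norm_num


end
end

section
/- Let H be a real inner product space, let J, B ∈ H, let η ≥ 0 and a ≥ 0. Define the resistive helicity variation δH := −2η⟨J, B⟩ and the resistive energy variation δE := −a − η‖J‖². Then |δH|² ≤ 8η · E(B) · |δE|, where E(B) := ½‖B‖². (With J the current, a = (J×B, 𝒜(J×B)) ≥ 0 the ideal dissipation for a positive semi-definite operator 𝒜, and η the resistivity, this gives the bound |δH|² ≤ 8η E(B) |δE| of order √η on the helicity loss during resistive relaxation.) -/
open MeasureTheory Matrix RealInnerProductSpace

noncomputable section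

/-! Cauchy–Schwarz gives `δH² ≤ 4η²‖J‖²‖B‖² = 8η E(B) · η‖J‖²`, and the ohmic dissipation
`η‖J‖²` is at most `|δE| = a + η‖J‖²`. -/

theorem sq_inner_le_sq_norm_mul_sq_norm {E : Type*} [NormedAddCommGroup E]
    [InnerProductSpace ℝ E] (x y : E) : ⟪x, y⟫ ^ 2 ≤ ‖x‖ ^ 2 * ‖y‖ ^ 2 := by
  rw [← mul_pow, ← sq_abs]
  exact pow_le_pow_left₀ (abs_nonneg _) (abs_real_inner_le_norm x y) 2

theorem le_abs_neg_sub_of_nonneg {x y : ℝ} (hx : 0 ≤ x) (hy : 0 ≤ y) : y ≤ |-x - y| := by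
  rw [abs_of_nonpos (by linarith)]
  linarith

/-- bound on the helicity loss during resistive relaxation:
|δH|² ≤ 8η·E(B)·|δE|. -/
theorem resistive_helicity_loss_bound
    {H : Type*} [NormedAddCommGroup H] [InnerProductSpace ℝ H]
    (J B : H) (η a : ℝ) (hη : 0 ≤ η) (ha : 0 ≤ a)
    (δH δE : ℝ)
    (hδH : δH = -2 * η * (inner ℝ J B : ℝ))
    (hδE : δE = -a - η * ‖J‖ ^ 2) :
    |δH| ^ 2 ≤ 8 * η * (1 / 2 * ‖B‖ ^ 2) * |δE| := by
  have hohmic : η * ‖J‖ ^ 2 ≤ |δE| :=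
    hδE ▸ le_abs_neg_sub_of_nonneg ha (by positivity)
  calc |δH| ^ 2 = (2 * η) ^ 2 * ⟪J, B⟫ ^ 2 := by rw [hδH, sq_abs]; ring
    _ ≤ (2 * η) ^ 2 * (‖J‖ ^ 2 * ‖B‖ ^ 2) := by gcongr; exact sq_inner_le_sq_norm_mul_sq_norm J B
    _ = 4 * η * ‖B‖ ^ 2 * (η * ‖J‖ ^ 2) := by ring
    _ ≤ 4 * η * ‖B‖ ^ 2 * |δE| := by gcongr
    _ = 8 * η * (1 / 2 * ‖B‖ ^ 2) * |δE| := by ring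

end
end
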